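/- arXiv:2003.03532 — 2 statements merged into one kernel-verified Lean document; each statement's English description precedes it below -/
import Mathlib

section
/- Suppose condition (Z) holds, g is twice differentiable with Hessian g'' satisfying ‖g'(z') − g'(z) − g''(z)·(z'−z)‖ ≤ (L₂/2)·‖z'−z‖² for all z, z' ∈ ℝ^m, and g' is L-Lipschitz. Then ‖ r_{k+1} − ( (1−α)·I_m + ε·α·g''(z_k) )·( r_k + A·(x_{k+1} − x_k) ) ‖ ≤ ε²·‖g''(z_k)‖·L·‖z_{k+1} − z_k‖ + ε·(L₂/2)·‖z_{k+1} − z_k‖², where ‖g''(z_k)‖ is the operator norm. In particular, if ‖r_k‖, ‖x_{k+1}−x_k‖ and ‖z_{k+1}−z_k‖ are all O(ε), then r_{k+1} = ((1−α)·I_m + ε·α·g''(z_k))·(r_k + A·(x_{k+1}−x_k)) + O(ε³). -/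
open Matrix MeasureTheory ProbabilityTheory Filter
open scoped RealInnerProductSpace

/-- Matrix-vector multiplication as a map between Euclidean spaces. -/
noncomputable def mulVecE {m n : ℕ} (A : Matrix (Fin m) (Fin n) ℝ)
    (x : EuclideanSpace ℝ (Fin n)) : EuclideanSpace ℝ (Fin m) := WithLp.toLp 2 (A.mulVec x)

/-- The (Euclidean) operator norm of a matrix. -/
noncomputable def opNorm {m n : ℕ} (B : Matrix (Fin m) (Fin n) ℝ) : ℝ :=
  ‖LinearMap.toContinuousLinearMap (Matrix.toEuclideanLin B)‖

lemma mulVecE_add {m n : ℕ} (A : Matrix (Fin m) (Fin n) ℝ)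
    (x y : EuclideanSpace ℝ (Fin n)) :
    mulVecE A (x + y) = mulVecE A x + mulVecE A y := by
  simp [mulVecE, Matrix.mulVec_add]

lemma mulVecE_smul {m n : ℕ} (A : Matrix (Fin m) (Fin n) ℝ) (c : ℝ)
    (x : EuclideanSpace ℝ (Fin n)) :
    mulVecE A (c • x) = c • mulVecE A x := by
  simp [mulVecE, Matrix.mulVec_smul]

lemma add_mulVecE {m n : ℕ} (A B : Matrix (Fin m) (Fin n) ℝ)
    (x : EuclideanSpace ℝ (Fin n)) :
    mulVecE (A + B) x = mulVecE A x + mulVecE B x := by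
  simp [mulVecE, Matrix.add_mulVec]

lemma smul_mulVecE {m n : ℕ} (c : ℝ) (A : Matrix (Fin m) (Fin n) ℝ)
    (x : EuclideanSpace ℝ (Fin n)) :
    mulVecE (c • A) x = c • mulVecE A x := by
  simp [mulVecE, Matrix.smul_mulVec]

lemma one_mulVecE {m : ℕ} (x : EuclideanSpace ℝ (Fin m)) :
    mulVecE (1 : Matrix (Fin m) (Fin m) ℝ) x = x := by
  simp [mulVecE, Matrix.one_mulVec]

lemma norm_mulVecE_le {m n : ℕ} (B : Matrix (Fin m) (Fin n) ℝ)
    (x : EuclideanSpace ℝ (Fin n)) :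
    ‖mulVecE B x‖ ≤ opNorm B * ‖x‖ := by
  have := (LinearMap.toContinuousLinearMap (Matrix.toEuclideanLin B)).le_opNorm x
  exact this

/-- second-order expansion of the residual propagation involving
the Hessian of g. -/
theorem gsadmm_residual_second_order
    (d m : ℕ) (A : Matrix (Fin m) (Fin d) ℝ)
    (g : EuclideanSpace ℝ (Fin m) → ℝ)
    (g' : EuclideanSpace ℝ (Fin m) → EuclideanSpace ℝ (Fin m))
    (hg : ∀ z, HasGradientAt g (g' z) z)
    (g'' : EuclideanSpace ℝ (Fin m) → Matrix (Fin m) (Fin m) ℝ)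
    (hg'' : ∀ z, HasFDerivAt g'
        (LinearMap.toContinuousLinearMap (Matrix.toEuclideanLin (g'' z))) z)
    (ε α L L₂ : ℝ) (hε : 0 < ε) (hα : α ∈ Set.Ioo (0 : ℝ) 2)
    (hL : 0 ≤ L) (hL₂ : 0 ≤ L₂)
    (hTaylor : ∀ z z' : EuclideanSpace ℝ (Fin m),
        ‖g' z' - g' z - mulVecE (g'' z) (z' - z)‖ ≤ (L₂ / 2) * ‖z' - z‖ ^ 2)
    (hLip : ∀ z z' : EuclideanSpace ℝ (Fin m), ‖g' z' - g' z‖ ≤ L * ‖z' - z‖)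
    (xk xk1 : EuclideanSpace ℝ (Fin d)) (zk zk1 : EuclideanSpace ℝ (Fin m))
    (hZ : ε • (g' zk1 - g' zk) = α • mulVecE A xk1 + (1 - α) • zk - zk1) :
    ‖(mulVecE A xk1 - zk1)
        - mulVecE ((1 - α) • (1 : Matrix (Fin m) (Fin m) ℝ) + (ε * α) • g'' zk)
            ((mulVecE A xk - zk) + mulVecE A (xk1 - xk))‖
      ≤ ε ^ 2 * opNorm (g'' zk) * L * ‖zk1 - zk‖
        + ε * (L₂ / 2) * ‖zk1 - zk‖ ^ 2 := by
  set G := g'' zk with hG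
  set D := g' zk1 - g' zk with hD
  set a := mulVecE A xk1 with ha
  -- s = A xk1 - zk
  have hs : (mulVecE A xk - zk) + mulVecE A (xk1 - xk) = a - zk := by
    have := mulVecE_add A xk (xk1 - xk)
    rw [ha]
    have h2 : xk + (xk1 - xk) = xk1 := by abel
    rw [← h2, this]
    abel
  have hGalpha : α • mulVecE G (a - zk)
      = mulVecE G (zk1 - zk) + ε • mulVecE G D := by
    have h1 : α • (a - zk) = (zk1 - zk) + ε • D := by
      have := hZ
      rw [smul_sub]
      -- α • a - α • zk = zk1 - zk + ε • D
      have hαa : α • a = ε • D - (1 - α) • zk + zk1 := by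
        rw [hZ]; abel
      rw [hαa, sub_smul, one_smul]
      module
    calc α • mulVecE G (a - zk) = mulVecE G (α • (a - zk)) := (mulVecE_smul G α _).symm
      _ = mulVecE G ((zk1 - zk) + ε • D) := by rw [h1]
      _ = mulVecE G (zk1 - zk) + ε • mulVecE G D := by
          rw [mulVecE_add, mulVecE_smul]
  have key : (a - zk1)
      - mulVecE ((1 - α) • (1 : Matrix (Fin m) (Fin m) ℝ) + (ε * α) • G) (a - zk)
      = ε • (D - mulVecE G (zk1 - zk)) - (ε ^ 2) • mulVecE G D := by
    rw [add_mulVecE, smul_mulVecE, smul_mulVecE, one_mulVecE]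
    have hεα : (ε * α) • mulVecE G (a - zk) = ε • (α • mulVecE G (a - zk)) := by
      rw [smul_smul]
    rw [hεα, hGalpha]
    have hed : a - zk1 - (1 - α) • (a - zk) = ε • D := by
      rw [hZ, sub_smul, one_smul, smul_sub]
      module
    have expand : a - zk1 - ((1 - α) • (a - zk)
        + ε • (mulVecE G (zk1 - zk) + ε • mulVecE G D))
        = (a - zk1 - (1 - α) • (a - zk))
          - ε • mulVecE G (zk1 - zk) - ε • (ε • mulVecE G D) := by
      rw [smul_add]; abel
    rw [expand, hed, smul_smul, ← sq, smul_sub]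
    rw [hD]
    module
  rw [hs, key]
  have h1 : ‖ε • (D - mulVecE G (zk1 - zk))‖ ≤ ε * ((L₂ / 2) * ‖zk1 - zk‖ ^ 2) := by
    rw [norm_smul, Real.norm_eq_abs, abs_of_pos hε]
    exact mul_le_mul_of_nonneg_left (hTaylor zk zk1) hε.le
  have h2 : ‖(ε ^ 2) • mulVecE G D‖ ≤ ε ^ 2 * (opNorm G * (L * ‖zk1 - zk‖)) := by
    rw [norm_smul, Real.norm_eq_abs, abs_of_pos (pow_pos hε 2)]
    refine mul_le_mul_of_nonneg_left ?_ (pow_pos hε 2).le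
    calc ‖mulVecE G D‖ ≤ opNorm G * ‖D‖ := norm_mulVecE_le G D
      _ ≤ opNorm G * (L * ‖zk1 - zk‖) := by
          refine mul_le_mul_of_nonneg_left ?_ (norm_nonneg _)
          exact hLip zk zk1
  calc ‖ε • (D - mulVecE G (zk1 - zk)) - (ε ^ 2) • mulVecE G D‖
      ≤ ‖ε • (D - mulVecE G (zk1 - zk))‖ + ‖(ε ^ 2) • mulVecE G D‖ := norm_sub_le _ _
    _ ≤ ε * ((L₂ / 2) * ‖zk1 - zk‖ ^ 2) + ε ^ 2 * (opNorm G * (L * ‖zk1 - zk‖)) := by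
        linarith
    _ = ε ^ 2 * opNorm G * L * ‖zk1 - zk‖ + ε * (L₂ / 2) * ‖zk1 - zk‖ ^ 2 := by ring
end

section
/- Consider sequences (x_k) in ℝ^d and (z_k) in ℝ^m such that z_0 = A·x_0 (so r_0 = 0), condition (Z) with α = 1 holds at every step k, g' is L-Lipschitz with L > 0, ε·L ≤ 1/4, and ‖x_{k+1} − x_k‖ ≤ B·ε for all k. Then the residual satisfies the uniform second-order bound ‖r_k‖ = ‖A·x_k − z_k‖ ≤ 4·L·‖A‖·B·ε² for every k ≥ 0, where ‖A‖ is the operator norm of A. (This is the inductive propagation of the O(ε²) residual bound for the standard stochastic ADMM initialized with z_0 = A x_0.) -/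
open Matrix MeasureTheory ProbabilityTheory Filter
open scoped RealInnerProductSpace

lemma mulVecE_norm_le {m n : ℕ} (A : Matrix (Fin m) (Fin n) ℝ)
    (v : EuclideanSpace ℝ (Fin n)) : ‖mulVecE A v‖ ≤ opNorm A * ‖v‖ := by
  have h : mulVecE A v = (LinearMap.toContinuousLinearMap (Matrix.toEuclideanLin A)) v := by
    simp [mulVecE, Matrix.toEuclideanLin_apply]
  rw [h]
  exact (LinearMap.toContinuousLinearMap (Matrix.toEuclideanLin A)).le_opNorm v

lemma mulVecE_sub {m n : ℕ} (A : Matrix (Fin m) (Fin n) ℝ)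
    (v w : EuclideanSpace ℝ (Fin n)) :
    mulVecE A (v - w) = mulVecE A v - mulVecE A w := by
  simp [mulVecE]
  rw [A.mulVec_sub v w]
  rfl

/-- inductive propagation of the O(ε²) residual bound for the
standard (α = 1) stochastic ADMM initialized with z_0 = A x_0. -/
theorem sadmm_residual_uniform_second_order
    (d m : ℕ) (A : Matrix (Fin m) (Fin d) ℝ)
    (g : EuclideanSpace ℝ (Fin m) → ℝ)
    (g' : EuclideanSpace ℝ (Fin m) → EuclideanSpace ℝ (Fin m))
    (hg : ∀ z, HasGradientAt g (g' z) z)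
    (ε L B : ℝ) (hε : 0 < ε) (hL : 0 < L) (hB : 0 ≤ B) (hεL : ε * L ≤ 1 / 4)
    (hLip : ∀ z z' : EuclideanSpace ℝ (Fin m), ‖g' z' - g' z‖ ≤ L * ‖z' - z‖)
    (x : ℕ → EuclideanSpace ℝ (Fin d)) (z : ℕ → EuclideanSpace ℝ (Fin m))
    (h0 : z 0 = mulVecE A (x 0))
    (hZ : ∀ k, ε • (g' (z (k + 1)) - g' (z k)) = mulVecE A (x (k + 1)) - z (k + 1))
    (hx : ∀ k, ‖x (k + 1) - x k‖ ≤ B * ε) :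
    ∀ k, ‖mulVecE A (x k) - z k‖ ≤ 4 * L * opNorm A * B * ε ^ 2 := by
  have hop : 0 ≤ opNorm A := norm_nonneg _
  intro k
  induction k with
  | zero =>
    rw [h0]
    simp
    positivity
  | succ k ih =>
    set r0 := mulVecE A (x k) - z k with hr0
    set r1 := mulVecE A (x (k + 1)) - z (k + 1) with hr1
    -- norm of r1 via (Z)
    have hnr1 : ‖r1‖ ≤ ε * L * ‖z (k + 1) - z k‖ := by
      rw [hr1, ← hZ k, norm_smul, Real.norm_eq_abs, abs_of_pos hε]
      have := hLip (z k) (z (k + 1))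
      calc ε * ‖g' (z (k + 1)) - g' (z k)‖ ≤ ε * (L * ‖z (k + 1) - z k‖) := by
            exact mul_le_mul_of_nonneg_left this hε.le
        _ = ε * L * ‖z (k + 1) - z k‖ := by ring
    -- bound ‖z_{k+1} - z_k‖
    have hdz : z (k + 1) - z k = mulVecE A (x (k + 1) - x k) - r1 + r0 := by
      rw [hr1, hr0, mulVecE_sub]; abel
    have hAx : ‖mulVecE A (x (k + 1) - x k)‖ ≤ opNorm A * (B * ε) := by
      calc ‖mulVecE A (x (k + 1) - x k)‖ ≤ opNorm A * ‖x (k + 1) - x k‖ :=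
            mulVecE_norm_le A _
        _ ≤ opNorm A * (B * ε) := mul_le_mul_of_nonneg_left (hx k) hop
    have hnz : ‖z (k + 1) - z k‖ ≤ opNorm A * (B * ε) + ‖r1‖ + ‖r0‖ := by
      rw [hdz]
      calc ‖mulVecE A (x (k + 1) - x k) - r1 + r0‖
          ≤ ‖mulVecE A (x (k + 1) - x k) - r1‖ + ‖r0‖ := norm_add_le _ _
        _ ≤ ‖mulVecE A (x (k + 1) - x k)‖ + ‖r1‖ + ‖r0‖ := by
            have := norm_sub_le (mulVecE A (x (k + 1) - x k)) r1
            linarith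
        _ ≤ opNorm A * (B * ε) + ‖r1‖ + ‖r0‖ := by linarith
    have hkey : ‖r1‖ ≤ ε * L * (opNorm A * (B * ε) + ‖r1‖ + ‖r0‖) := by
      calc ‖r1‖ ≤ ε * L * ‖z (k + 1) - z k‖ := hnr1
        _ ≤ ε * L * (opNorm A * (B * ε) + ‖r1‖ + ‖r0‖) := by
            apply mul_le_mul_of_nonneg_left hnz
            positivity
    have hr1n : 0 ≤ ‖r1‖ := norm_nonneg _
    have hr0n : 0 ≤ ‖r0‖ := norm_nonneg _
    have hC : 0 ≤ opNorm A * (B * ε) := by positivity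
    -- from ih : ‖r0‖ ≤ 4 L ‖A‖ B ε², and 4 L ε ≤ 1, get ‖r0‖ ≤ ‖A‖ B ε
    have h4 : 4 * L * ε ≤ 1 := by nlinarith
    have hr0C : ‖r0‖ ≤ opNorm A * (B * ε) := by
      calc ‖r0‖ ≤ 4 * L * opNorm A * B * ε ^ 2 := ih
        _ = (4 * L * ε) * (opNorm A * (B * ε)) := by ring
        _ ≤ 1 * (opNorm A * (B * ε)) := mul_le_mul_of_nonneg_right h4 hC
        _ = opNorm A * (B * ε) := one_mul _
    nlinarith [mul_le_mul_of_nonneg_right hεL hr1n, mul_le_mul_of_nonneg_right hεL hC]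
end
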